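/- arXiv:2306.11156 — 4 statements merged into one kernel-verified Lean document; each statement's English description precedes it below -/
import Mathlib

section
/- Let 𝔾 ⊂ ℂ be a bounded set with 1 ∈ 𝔾. Let (Ω, d) be a separable Abelian metric group whose metric d is invariant under translations, let X be a Banach space with a continuous dense additive embedding X ↪ Ω, and let ({φ_n}_{n=1}^∞, {c_n}_{n=1}^∞) be a biorthonormal system in (X, X*). Suppose the system {φ_n} possesses the universal approximation property in Ω. Then there exists U ∈ X which is almost universal for Ω with respect to {φ_n}: there exists a sequence {δ_n}_{n=1}^∞ ⊂ 𝔾 with limsup_{n→∞} #{m ∈ ℕ : m ≤ n and δ_m = 1}/n = 1 such that for every f ∈ Ω there is a subsequence {N_k} ⊂ ℕ with d(Σ_{n=1}^{N_k} δ_n c_n(U) φ_n, f) → 0 as k → ∞. -/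
/-!
Fix a dense sequence `g` in `Ω` and aim, at stage `k`, at the target `g k.unpair.1`, so that every
`g m` is aimed at infinitely often. The element `U = ∑ h_k` is built block by block: at stage `k`
the universal approximation property, extended to all targets by density and shifted by the
invariance of `d`, yields `h_k` with `‖h_k‖ < 2⁻ᵏ`, supported (in the coordinates `c n`) on a
block placed far beyond the previous one, and multipliers in `𝔾` that bring the modulated partial
sum within `2⁻ᵏ` of the target. By biorthogonality the coefficients of `U` on block `k` are those
of `h_k`, so the modulated partial sums of `U` at the block ends are exactly the approximations
built along the way. The multipliers are `1` on the gap `[B, (k + 1) (B + 1))` in front of the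
block, `B` being the end of the previous block; these gaps force upper density `1`.
-/

open Filter Topology Finset

theorem mapClusterPt_of_tendsto_dist_unpair {Ω : Type*} [PseudoMetricSpace Ω] {g x : ℕ → Ω}
    (hg : DenseRange g) (hx : Tendsto (fun k => dist (x k) (g k.unpair.1)) atTop (𝓝 0)) (f : Ω) :
    MapClusterPt f atTop x := by
  have hcluster : ∀ m, MapClusterPt (g m) atTop x := fun m => by
    have hpair : Tendsto (Nat.pair m) atTop atTop :=
      tendsto_atTop_mono (Nat.right_le_pair m) tendsto_id
    refine MapClusterPt.of_comp hpair (Tendsto.mapClusterPt ?_)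
    rw [tendsto_iff_dist_tendsto_zero]
    simpa [Function.comp_def] using hx.comp hpair
  have hclosed : IsClosed {y | MapClusterPt y atTop x} := isClosed_setOfPred_clusterPt
  exact hg.induction_on f hclosed hcluster

theorem limsup_card_filter_range_div_eq_one {p : ℕ → Prop} [DecidablePred p] {a b : ℕ → ℕ}
    (hb : Tendsto b atTop atTop) (hab : Tendsto (fun k => (a k : ℝ) / b k) atTop (𝓝 0))
    (hp : ∀ k, ∀ m ∈ Ico (a k) (b k), p m) :
    limsup (fun n : ℕ => (#{m ∈ range n | p m} : ℝ) / n) atTop = 1 := by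
  set u : ℕ → ℝ := fun n => (#{m ∈ range n | p m} : ℝ) / n
  have hu_le : ∀ n, u n ≤ 1 := fun n =>
    div_le_one_of_le₀ (by simpa using card_filter_le (range n) p) n.cast_nonneg
  have hu_ge : ∀ᶠ k in atTop, 1 - (a k : ℝ) / b k ≤ u (b k) := by
    filter_upwards [hb.eventually_gt_atTop 0] with k hk
    have hcard : b k - a k ≤ #{m ∈ range (b k) | p m} := by
      simpa using card_le_card (s := Ico (a k) (b k)) fun m hm =>
        mem_filter.2 ⟨mem_range.2 (mem_Ico.1 hm).2, hp k m hm⟩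
    have hk' : (0 : ℝ) < b k := by exact_mod_cast hk
    rw [one_sub_div hk'.ne']
    refine div_le_div_of_nonneg_right ?_ hk'.le
    exact le_trans (by rw [sub_le_iff_le_add]; norm_cast; omega) (Nat.cast_le.2 hcard)
  have hlim : Tendsto (u ∘ b) atTop (𝓝 1) := by
    refine tendsto_of_tendsto_of_tendsto_of_le_of_le' (by simpa using hab.const_sub 1)
      tendsto_const_nhds hu_ge (Eventually.of_forall fun k => hu_le (b k))
  have hbdd : IsBoundedUnder (· ≤ ·) atTop u :=
    isBoundedUnder_of_eventually_le (Eventually.of_forall hu_le)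
  refine le_antisymm (limsup_le_of_le ?_ (Eventually.of_forall hu_le))
    ((MapClusterPt.of_comp hb hlim.mapClusterPt).le_limsup hbdd)
  exact isCoboundedUnder_le_of_eventually_le atTop (Eventually.of_forall fun n => by positivity)

section Approximation

variable {X Ω : Type*} [NormedAddCommGroup X] [NormedSpace ℂ X] [PseudoMetricSpace Ω]
  [AddCommGroup Ω]
  {𝔾 : Set ℂ} {j : X →+ Ω} {φ : ℕ → X} {c : ℕ → X →L[ℂ] ℂ}

theorem dist_add_eq_dist_sub (hinv : ∀ a b h : Ω, dist (a + h) (b + h) = dist a b) (a b h : Ω) :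
    dist (a + h) b = dist a (b - h) := by
  rw [← hinv a (b - h) h, sub_add_cancel]

theorem coeff_sum_smul (hbi : ∀ n m : ℕ, c n (φ m) = if n = m then 1 else 0) (s : Finset ℕ)
    (α : ℕ → ℂ) (m : ℕ) : c m (∑ n ∈ s, α n • φ n) = if m ∈ s then α m else 0 := by
  simp [hbi]

/-- The universal approximation property says that `j f` is approximable for all `f` in a
dense set. -/
def IsApproximable (𝔾 : Set ℂ) (j : X →+ Ω) (φ : ℕ → X) (y : Ω) : Prop :=
  ∀ ε > (0 : ℝ), ∀ δ > (0 : ℝ), ∀ n0 : ℕ,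
    ∃ N : ℕ, n0 ≤ N ∧ ∃ α : ℕ → ℂ, ∃ d : ℕ → ℂ, (∀ n, d n ∈ 𝔾) ∧
      ‖∑ n ∈ Icc n0 N, α n • φ n‖ < ε ∧ dist y (j (∑ n ∈ Icc n0 N, (d n * α n) • φ n)) < δ

theorem IsApproximable.of_mem_closure {s : Set Ω} (hs : ∀ y ∈ s, IsApproximable 𝔾 j φ y)
    {y : Ω} (hy : y ∈ closure s) : IsApproximable 𝔾 j φ y := by
  intro ε hε δ hδ n0
  obtain ⟨z, hz, hyz⟩ := Metric.mem_closure_iff.1 hy (δ / 2) (half_pos hδ)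
  obtain ⟨N, hN, α, d, hd, hα, hzQ⟩ := hs z hz ε hε (δ / 2) (half_pos hδ) n0
  refine ⟨N, hN, α, d, hd, hα, ?_⟩
  linarith [dist_triangle y z (j (∑ n ∈ Icc n0 N, (d n * α n) • φ n))]

theorem exists_block (happrox : ∀ y, IsApproximable 𝔾 j φ y)
    (hinv : ∀ a b h : Ω, dist (a + h) (b + h) = dist a b)
    (hbi : ∀ n m : ℕ, c n (φ m) = if n = m then 1 else 0) (h𝔾one : (1 : ℂ) ∈ 𝔾)
    (P : X) (y : Ω) {ε : ℝ} (hε : 0 < ε) {B n0 : ℕ} (hBn0 : B ≤ n0) :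
    ∃ (B' : ℕ) (h : X) (δ : ℕ → ℂ), n0 < B' ∧ ‖h‖ < ε ∧ (∀ n, δ n ∈ 𝔾) ∧ (∀ n < n0, δ n = 1) ∧
      (∀ n ∉ Ico B B', c n h = 0) ∧
      dist (j (P + ∑ n ∈ Ico B B', (δ n * c n h) • φ n)) y < ε := by
  obtain ⟨N, hN, α, δ, hδ, hα, hdist⟩ := happrox (y - j P) ε hε ε hε n0
  set h := ∑ n ∈ Icc n0 N, α n • φ n
  have hc : ∀ n, c n h = if n ∈ Icc n0 N then α n else 0 := coeff_sum_smul hbi _ α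
  set δ' : ℕ → ℂ := fun n => if n0 ≤ n then δ n else 1
  have hsub : Icc n0 N ⊆ Ico B (N + 1) := fun n hn => by
    simp only [mem_Icc, mem_Ico] at hn ⊢; omega
  have hsum : ∑ n ∈ Ico B (N + 1), (δ' n * c n h) • φ n = ∑ n ∈ Icc n0 N, (δ n * α n) • φ n := by
    rw [← sum_subset hsub fun n _ hn => by simp [hc, hn]]
    exact sum_congr rfl fun n hn => by simp [hc, hn, δ', (mem_Icc.1 hn).1]
  refine ⟨N + 1, h, δ', by omega, hα, fun n => ?_, fun n hn => if_neg (not_le.2 hn),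
    fun n hn => ?_, ?_⟩
  · by_cases hn : n0 ≤ n <;> simp [δ', hn, hδ, h𝔾one]
  · rw [hc, if_neg fun h' => hn (hsub h')]
  · rw [hsum, map_add, add_comm, dist_add_eq_dist_sub hinv, dist_comm]
    exact hdist

end Approximation

/-- Block `k` is `[start k, start (k + 1))`; there the coefficients of the sum come from
`piece k` and the multipliers from `mult k`. -/
structure BlockData (X : Type*) [NormedAddCommGroup X] [NormedSpace ℂ X] (𝔾 : Set ℂ)
    (c : ℕ → X →L[ℂ] ℂ) where
  start : ℕ → ℕ
  piece : ℕ → X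
  mult : ℕ → ℕ → ℂ
  start_zero : start 0 = 0
  gap_lt_start_succ : ∀ k, (k + 1) * (start k + 1) < start (k + 1)
  norm_piece_lt : ∀ k, ‖piece k‖ < (1 / 2 : ℝ) ^ k
  mult_mem : ∀ k n, mult k n ∈ 𝔾
  mult_eq_one : ∀ k n, n < (k + 1) * (start k + 1) → mult k n = 1
  coeff_piece_eq_zero : ∀ k n, n ∉ Ico (start k) (start (k + 1)) → c n (piece k) = 0

namespace BlockData

variable {X : Type*} [NormedAddCommGroup X] [NormedSpace ℂ X] {𝔾 : Set ℂ} {c : ℕ → X →L[ℂ] ℂ}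
  (S : BlockData X 𝔾 c)

noncomputable def blockSum (φ : ℕ → X) (k : ℕ) : X :=
  ∑ n ∈ Ico (S.start k) (S.start (k + 1)), (S.mult k n * c n (S.piece k)) • φ n

theorem start_lt_gap (k : ℕ) : S.start k < (k + 1) * (S.start k + 1) := by
  nlinarith

theorem start_strictMono : StrictMono S.start :=
  strictMono_nat_of_lt_succ fun k => (S.start_lt_gap k).trans (S.gap_lt_start_succ k)

theorem exists_lt_start_succ (n : ℕ) : ∃ k, n < S.start (k + 1) :=
  ⟨n, Nat.lt_of_lt_of_le n.lt_succ_self (S.start_strictMono.id_le (n + 1))⟩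

def epoch (n : ℕ) : ℕ := Nat.find (S.exists_lt_start_succ n)

theorem epoch_eq_of_mem_Ico {k n : ℕ} (hn : n ∈ Ico (S.start k) (S.start (k + 1))) :
    S.epoch n = k := by
  rw [mem_Ico] at hn
  refine (Nat.find_eq_iff _).2 ⟨hn.2, fun m hm => not_lt.2 ?_⟩
  exact (S.start_strictMono.monotone (by omega : m + 1 ≤ k)).trans hn.1

def multiplier (n : ℕ) : ℂ := S.mult (S.epoch n) n

noncomputable def element : X := ∑' k, S.piece k

theorem multiplier_mem (n : ℕ) : S.multiplier n ∈ 𝔾 := S.mult_mem _ n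

theorem coeff_element [CompleteSpace X] (n : ℕ) :
    c n S.element = c n (S.piece (S.epoch n)) := by
  have hsum : Summable S.piece :=
    .of_norm_bounded summable_geometric_two fun k => (S.norm_piece_lt k).le
  rw [element, (c n).map_tsum hsum]
  exact tsum_eq_single _ fun k hk =>
    S.coeff_piece_eq_zero k n fun hn => hk (S.epoch_eq_of_mem_Ico hn).symm

theorem sum_range_start [CompleteSpace X] (φ : ℕ → X) (k : ℕ) :
    ∑ n ∈ range (S.start k), (S.multiplier n * c n S.element) • φ n =
      ∑ i ∈ range k, S.blockSum φ i := by
  induction k with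
  | zero => simp [S.start_zero]
  | succ k ih =>
    rw [← sum_range_add_sum_Ico _ (S.start_strictMono.monotone k.le_succ), ih, sum_range_succ]
    refine congrArg _ (sum_congr rfl fun n hn => ?_)
    rw [multiplier, coeff_element, S.epoch_eq_of_mem_Ico hn]

theorem limsup_card_multiplier_eq_one :
    limsup (fun n : ℕ => (#{m ∈ range n | S.multiplier m = 1} : ℝ) / n) atTop = 1 := by
  refine limsup_card_filter_range_div_eq_one (a := S.start)
    (b := fun k => (k + 1) * (S.start k + 1)) ?_ ?_ fun k m hm => ?_
  · exact tendsto_atTop_mono (fun k => Nat.le_mul_of_pos_right _ (S.start k).succ_pos)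
      (tendsto_add_atTop_nat 1)
  · refine squeeze_zero (fun k => by positivity) (fun k => ?_)
      tendsto_one_div_add_atTop_nhds_zero_nat
    rw [div_le_div_iff₀ (by positivity) (by positivity)]
    push_cast
    nlinarith
  · rw [multiplier, S.epoch_eq_of_mem_Ico (Ico_subset_Ico_right (S.gap_lt_start_succ k).le hm)]
    exact S.mult_eq_one k m (mem_Ico.1 hm).2

end BlockData

theorem exists_blockData {X Ω : Type*} [NormedAddCommGroup X] [NormedSpace ℂ X]
    [PseudoMetricSpace Ω] [AddCommGroup Ω] {𝔾 : Set ℂ} {j : X →+ Ω} {φ : ℕ → X} {c : ℕ → X →L[ℂ] ℂ}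
    (happrox : ∀ y, IsApproximable 𝔾 j φ y)
    (hinv : ∀ a b h : Ω, dist (a + h) (b + h) = dist a b)
    (hbi : ∀ n m : ℕ, c n (φ m) = if n = m then 1 else 0) (h𝔾one : (1 : ℂ) ∈ 𝔾) (y : ℕ → Ω) :
    ∃ S : BlockData X 𝔾 c,
      ∀ k, dist (j (∑ i ∈ range (k + 1), S.blockSum φ i)) (y k) < (1 / 2) ^ k := by
  choose B' h δ hB' hh hδ hδ1 hc hdist using fun (k : ℕ) (s : ℕ × X) =>
    exists_block happrox hinv hbi h𝔾one s.2 (y k) (pow_pos one_half_pos k)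
      (Nat.le_mul_of_pos_left _ k.succ_pos |>.trans' s.1.le_succ)
  -- `state k` holds the end of the first `k` blocks and their modulated sum.
  let state : ℕ → ℕ × X := fun k => Nat.rec (0, 0) (fun k s =>
    (B' k s, s.2 + ∑ n ∈ Ico s.1 (B' k s), (δ k s n * c n (h k s)) • φ n)) k
  let S : BlockData X 𝔾 c :=
    { start := fun k => (state k).1
      piece := fun k => h k (state k)
      mult := fun k => δ k (state k)
      start_zero := rfl
      gap_lt_start_succ := fun k => hB' k (state k)
      norm_piece_lt := fun k => hh k (state k)
      mult_mem := fun k => hδ k (state k)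
      mult_eq_one := fun k => hδ1 k (state k)
      coeff_piece_eq_zero := fun k => hc k (state k) }
  have hstate : ∀ k, (state k).2 = ∑ i ∈ range k, S.blockSum φ i := fun k => by
    induction k with
    | zero => rfl
    | succ k ih => rw [sum_range_succ, ← ih]; rfl
  exact ⟨S, fun k => by rw [sum_range_succ, ← hstate]; exact hdist k (state k)⟩

theorem exists_almost_universal_element_general {X Ω : Type*}
    [NormedAddCommGroup X] [NormedSpace ℂ X] [CompleteSpace X]
    [MetricSpace Ω] [AddCommGroup Ω] [TopologicalSpace.SeparableSpace Ω]
    (hinv : ∀ a b h : Ω, dist (a + h) (b + h) = dist a b)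
    (𝔾 : Set ℂ) (h𝔾one : (1 : ℂ) ∈ 𝔾)
    (j : X →+ Ω) (hj_cont : Continuous j)
    (hj_dense : DenseRange j)
    (φ : ℕ → X) (c : ℕ → X →L[ℂ] ℂ)
    (hbi : ∀ n m : ℕ, c n (φ m) = if n = m then 1 else 0)
    -- the universal approximation property of the system `φ` in `Ω`:
    (huap : ∃ D : Set X, Dense D ∧
      ∀ f ∈ D, ∀ ε > (0 : ℝ), ∀ δ > (0 : ℝ), ∀ n0 : ℕ,
        ∃ N : ℕ, n0 ≤ N ∧ ∃ α : ℕ → ℂ, ∃ d : ℕ → ℂ, (∀ n, d n ∈ 𝔾) ∧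
          ‖∑ n ∈ Finset.Icc n0 N, α n • φ n‖ < ε ∧
          dist (j f) (j (∑ n ∈ Finset.Icc n0 N, (d n * α n) • φ n)) < δ) :
    ∃ U : X, ∃ d : ℕ → ℂ, (∀ n, d n ∈ 𝔾) ∧
      Filter.limsup (fun n : ℕ =>
        (((Finset.range n).filter (fun m => d m = 1)).card : ℝ) / n) atTop = 1 ∧
      ∀ f : Ω, ∃ N : ℕ → ℕ, StrictMono N ∧
        Tendsto (fun k => j (∑ n ∈ Finset.range (N k), (d n * c n U) • φ n))
          atTop (𝓝 f) := by
  obtain ⟨D, hD, hUAP⟩ := huap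
  have happrox : ∀ y, IsApproximable 𝔾 j φ y := fun y =>
    IsApproximable.of_mem_closure (s := j '' D) (by rintro _ ⟨f, hf, rfl⟩; exact hUAP f hf)
      ((hj_dense.dense_image hj_cont hD).closure_eq ▸ Set.mem_univ y)
  have : Nonempty Ω := ⟨0⟩
  set g := TopologicalSpace.denseSeq Ω
  obtain ⟨S, hS⟩ := exists_blockData happrox hinv hbi h𝔾one fun k => g k.unpair.1
  refine ⟨S.element, S.multiplier, S.multiplier_mem, S.limsup_card_multiplier_eq_one, fun f => ?_⟩
  have hdist : Tendsto (fun k => dist (j (∑ i ∈ range (k + 1), S.blockSum φ i)) (g k.unpair.1))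
      atTop (𝓝 0) :=
    squeeze_zero (fun _ => dist_nonneg) (fun k => (hS k).le)
      (tendsto_pow_atTop_nhds_zero_of_lt_one (by norm_num) (by norm_num))
  obtain ⟨ψ, hψ, hlim⟩ := (mapClusterPt_of_tendsto_dist_unpair
    (TopologicalSpace.denseRange_denseSeq Ω) hdist f).tendsto_subseq
  refine ⟨fun k => S.start (ψ k + 1), S.start_strictMono.comp (hψ.add_const 1), ?_⟩
  simpa only [S.sum_range_start, Function.comp_def] using hlim

/-- If `Ω` is a separable Abelian metric group with an invariant metric,
`X` a Banach space with a continuous dense additive embedding `j : X ↪ Ω`, and `(φ, c)` a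
biorthonormal system in `(X, X*)` possessing the universal approximation property in `Ω`,
then there exists an element `U ∈ X` which is almost universal for `Ω` w.r.t. `φ`. -/
theorem exists_almost_universal_element {X Ω : Type*}
    [NormedAddCommGroup X] [NormedSpace ℂ X] [CompleteSpace X]
    [MetricSpace Ω] [AddCommGroup Ω] [TopologicalSpace.SeparableSpace Ω]
    (hinv : ∀ a b h : Ω, dist (a + h) (b + h) = dist a b)
    (𝔾 : Set ℂ) (h𝔾bdd : Bornology.IsBounded 𝔾) (h𝔾one : (1 : ℂ) ∈ 𝔾)
    (j : X →+ Ω) (hj_cont : Continuous j) (hj_inj : Function.Injective j)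
    (hj_dense : DenseRange j)
    (φ : ℕ → X) (c : ℕ → X →L[ℂ] ℂ)
    (hbi : ∀ n m : ℕ, c n (φ m) = if n = m then 1 else 0)
    -- the universal approximation property of the system `φ` in `Ω`:
    (huap : ∃ D : Set X, Dense D ∧
      ∀ f ∈ D, ∀ ε > (0 : ℝ), ∀ δ > (0 : ℝ), ∀ n0 : ℕ,
        ∃ N : ℕ, n0 ≤ N ∧ ∃ α : ℕ → ℂ, ∃ d : ℕ → ℂ, (∀ n, d n ∈ 𝔾) ∧
          ‖∑ n ∈ Finset.Icc n0 N, α n • φ n‖ < ε ∧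
          dist (j f) (j (∑ n ∈ Finset.Icc n0 N, (d n * α n) • φ n)) < δ) :
    ∃ U : X, ∃ d : ℕ → ℂ, (∀ n, d n ∈ 𝔾) ∧
      Filter.limsup (fun n : ℕ =>
        (((Finset.range n).filter (fun m => d m = 1)).card : ℝ) / n) atTop = 1 ∧
      ∀ f : Ω, ∃ N : ℕ → ℕ, StrictMono N ∧
        Tendsto (fun k => j (∑ n ∈ Finset.range (N k), (d n * c n U) • φ n))
          atTop (𝓝 f) :=
  exists_almost_universal_element_general hinv 𝔾 h𝔾one j hj_cont hj_dense φ c hbi huap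
end

section
/- Let M be a finite measure space and {φ_n}_{n=1}^∞ ⊂ L^1(M) a minimal system with biorthogonal functionals {c_n} ⊂ L^∞(M), and let 𝔾 ⊂ ℂ be a bounded set with 1 ∈ 𝔾. Then {φ_n} possesses the asymptotic approximation property in L^1(M) if and only if there exist a dense subset D ⊂ L^1(M) and a constant C > 0 such that for every f ∈ D, every ε, δ, σ > 0 and every n_0 ∈ ℕ there exist N > n_0, coefficients {α_n}_{n=n_0}^N ⊂ ℂ, values {δ_n}_{n=n_0}^N ⊂ 𝔾, a measurable set E ⊂ M, and a function ĝ ∈ L^1(M) such that: (1) |E^∁| < σ; (2) ‖H‖_1 < ε where H = Σ_{n=n_0}^N α_n φ_n; (3) f(x) = ĝ(x) for all x ∈ E; (4) ‖ĝ‖_1 ≤ C‖f‖_1; (5) ∫_E |f(x) − Q(x)| dx = ‖ĝ − Q‖_1 < δ where Q = Σ_{n=n_0}^N δ_n α_n φ_n. -/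
/-!
Given the data of the asymptotic approximation property, the function `ĝ` equal to `f` on `E`
and to `Q` off `E` satisfies `‖ĝ - Q‖₁ = ∫_E |f - Q|` and `‖ĝ‖₁ ≤ ∫_E |f| + ∫_{Eᶜ} |Q|`.
Conversely, `∫_{Eᶜ} |Q| ≤ ‖Q‖₁ ≤ ‖ĝ‖₁ + ‖ĝ - Q‖₁`, and the last term is at most `‖f‖₁` once the
tolerance `δ` is replaced by `min δ ‖f‖₁`. Either way the constant grows from `C` to `C + 1`.
-/

open MeasureTheory Filter Topology

/-- `D` is a subset of `L¹(μ)` (identified with integrable functions) which is dense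
in the `L¹` metric. -/
def L1DenseSubset {M : Type*} [MeasurableSpace M] (μ : Measure M)
    (D : Set (M → ℂ)) : Prop :=
  (∀ f ∈ D, Integrable f μ) ∧
  ∀ g : M → ℂ, Integrable g μ → ∀ η > (0 : ℝ), ∃ f ∈ D, ∫ x, ‖f x - g x‖ ∂μ < η

/-- The asymptotic approximation property (Definition 5 of the paper) of the system `φ`
in `L¹(μ)`, with a given dense subset `D` and constant `C`. -/
def AsymApproxPropWith {M : Type*} [MeasurableSpace M] (μ : Measure M)
    (φ : ℕ → M → ℂ) (𝔾 : Set ℂ) (D : Set (M → ℂ)) (C : ℝ) : Prop :=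
  ∀ f ∈ D, ∀ ε > (0 : ℝ), ∀ δ > (0 : ℝ), ∀ σ > (0 : ℝ), ∀ n0 : ℕ,
    ∃ N : ℕ, n0 < N ∧ ∃ α : ℕ → ℂ, ∃ d : ℕ → ℂ, (∀ n, d n ∈ 𝔾) ∧
      ∃ E : Set M, MeasurableSet E ∧ μ Eᶜ < ENNReal.ofReal σ ∧
        (∫ x, ‖∑ n ∈ Finset.Icc n0 N, α n * φ n x‖ ∂μ < ε) ∧
        (∫ x in E, ‖f x - ∑ n ∈ Finset.Icc n0 N, d n * α n * φ n x‖ ∂μ < δ) ∧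
        (∫ x in Eᶜ, ‖∑ n ∈ Finset.Icc n0 N, d n * α n * φ n x‖ ∂μ ≤
          C * ∫ x, ‖f x‖ ∂μ)

/-- The equivalent form of the asymptotic approximation property given in
Lemma `AsymApproxLemma` of the paper, with a given dense subset `D` and constant `C`. -/
def AsymApproxPropHatWith {M : Type*} [MeasurableSpace M] (μ : Measure M)
    (φ : ℕ → M → ℂ) (𝔾 : Set ℂ) (D : Set (M → ℂ)) (C : ℝ) : Prop :=
  ∀ f ∈ D, ∀ ε > (0 : ℝ), ∀ δ > (0 : ℝ), ∀ σ > (0 : ℝ), ∀ n0 : ℕ,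
    ∃ N : ℕ, n0 < N ∧ ∃ α : ℕ → ℂ, ∃ d : ℕ → ℂ, (∀ n, d n ∈ 𝔾) ∧
      ∃ E : Set M, MeasurableSet E ∧ μ Eᶜ < ENNReal.ofReal σ ∧
        ∃ g : M → ℂ, Integrable g μ ∧
          (∫ x, ‖∑ n ∈ Finset.Icc n0 N, α n * φ n x‖ ∂μ < ε) ∧
          (∀ x ∈ E, f x = g x) ∧
          (∫ x, ‖g x‖ ∂μ ≤ C * ∫ x, ‖f x‖ ∂μ) ∧
          (∫ x in E, ‖f x - ∑ n ∈ Finset.Icc n0 N, d n * α n * φ n x‖ ∂μ =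
            ∫ x, ‖g x - ∑ n ∈ Finset.Icc n0 N, d n * α n * φ n x‖ ∂μ) ∧
          (∫ x, ‖g x - ∑ n ∈ Finset.Icc n0 N, d n * α n * φ n x‖ ∂μ < δ)

section NormIntegral

variable {α F : Type*} [MeasurableSpace α] {μ : Measure α} [NormedAddCommGroup F]

lemma setIntegral_norm_le_integral_norm {f : α → F} (hf : Integrable f μ) (s : Set α) :
    ∫ x in s, ‖f x‖ ∂μ ≤ ∫ x, ‖f x‖ ∂μ :=
  setIntegral_le_integral hf.norm (.of_forall fun _ => norm_nonneg _)

lemma integral_norm_le_integral_norm_add_integral_norm_sub {f g : α → F}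
    (hf : Integrable f μ) (hg : Integrable g μ) :
    ∫ x, ‖g x‖ ∂μ ≤ ∫ x, ‖f x‖ ∂μ + ∫ x, ‖f x - g x‖ ∂μ :=
  calc ∫ x, ‖g x‖ ∂μ ≤ ∫ x, (‖f x‖ + ‖f x - g x‖) ∂μ :=
        integral_mono hg.norm (hf.norm.add (hf.sub hg).norm)
          fun x => norm_le_norm_add_norm_sub (f x) (g x)
    _ = ∫ x, ‖f x‖ ∂μ + ∫ x, ‖f x - g x‖ ∂μ := integral_add hf.norm (hf.sub hg).norm

variable {s : Set α} [DecidablePred (· ∈ s)]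

lemma integral_norm_piecewise (hs : MeasurableSet s) {f g : α → F}
    (hf : IntegrableOn f s μ) (hg : IntegrableOn g sᶜ μ) :
    ∫ x, ‖s.piecewise f g x‖ ∂μ = ∫ x in s, ‖f x‖ ∂μ + ∫ x in sᶜ, ‖g x‖ ∂μ := by
  simp_rw [Set.apply_piecewise s f g fun _ => norm]
  exact integral_piecewise hs hf.norm hg.norm

lemma integral_norm_piecewise_sub (hs : MeasurableSet s) (f g : α → F) :
    ∫ x, ‖s.piecewise f g x - g x‖ ∂μ = ∫ x in s, ‖f x - g x‖ ∂μ := by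
  rw [← integral_indicator hs]
  congr 1 with x
  by_cases hx : x ∈ s <;> simp [hx]

end NormIntegral

section AsymApprox

variable {M : Type*} [MeasurableSpace M] {μ : Measure M} {φ : ℕ → M → ℂ} {𝔾 : Set ℂ}
  {D : Set (M → ℂ)} {C : ℝ}

lemma integrable_finset_sum_mul (hφ : ∀ n, Integrable (φ n) μ) (s : Finset ℕ) (a : ℕ → ℂ) :
    Integrable (fun x => ∑ n ∈ s, a n * φ n x) μ :=
  integrable_finsetSum _ fun n _ => (hφ n).const_mul _

theorem AsymApproxPropWith.asymApproxPropHatWith (hφ : ∀ n, Integrable (φ n) μ)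
    (hD : ∀ f ∈ D, Integrable f μ) (h : AsymApproxPropWith μ φ 𝔾 D C) :
    AsymApproxPropHatWith μ φ 𝔾 D (C + 1) := by
  classical
  intro f hf ε hε δ hδ σ hσ n0
  obtain ⟨N, hN, α, d, hd, E, hE, hσE, hH, hfQ, hQ_compl⟩ := h f hf ε hε δ hδ σ hσ n0
  set Q := fun x => ∑ n ∈ Finset.Icc n0 N, d n * α n * φ n x
  have hQ_int : Integrable Q μ := integrable_finset_sum_mul hφ _ _
  have hf_int : Integrable f μ := hD f hf
  have hgQ : ∫ x in E, ‖f x - Q x‖ ∂μ = ∫ x, ‖E.piecewise f Q x - Q x‖ ∂μ :=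
    (integral_norm_piecewise_sub hE f Q).symm
  refine ⟨N, hN, α, d, hd, E, hE, hσE, E.piecewise f Q,
    .piecewise hE hf_int.integrableOn hQ_int.integrableOn, hH,
    fun x hx => (E.piecewise_eq_of_mem f Q hx).symm, ?_, hgQ, hgQ ▸ hfQ⟩
  rw [integral_norm_piecewise hE hf_int.integrableOn hQ_int.integrableOn]
  linarith [setIntegral_norm_le_integral_norm hf_int E]

theorem AsymApproxPropHatWith.asymApproxPropWith (hφ : ∀ n, Integrable (φ n) μ)
    (hD : ∀ f ∈ D, Integrable f μ) (h : AsymApproxPropHatWith μ φ 𝔾 D C) :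
    AsymApproxPropWith μ φ 𝔾 D (C + 1) := by
  intro f hf ε hε δ hδ σ hσ n0
  have hf_int : Integrable f μ := hD f hf
  rcases (integral_nonneg fun x => norm_nonneg (f x) : 0 ≤ ∫ x, ‖f x‖ ∂μ).eq_or_lt
    with hf_zero | hf_pos
  · -- `min δ ‖f‖₁` is no tolerance here, but the zero combination already works.
    obtain ⟨N, hN, -, d, hd, E, hE, hσE, -⟩ := h f hf ε hε δ hδ σ hσ n0
    refine ⟨N, hN, 0, d, hd, E, hE, hσE, by simpa using hε, ?_, by simp [← hf_zero]⟩
    simpa using (setIntegral_norm_le_integral_norm hf_int E).trans_lt (hf_zero ▸ hδ)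
  · obtain ⟨N, hN, α, d, hd, E, hE, hσE, g, hg, hH, -, hg_norm, hfQ, hgQ⟩ :=
      h f hf ε hε (min δ (∫ x, ‖f x‖ ∂μ)) (lt_min hδ hf_pos) σ hσ n0
    set Q := fun x => ∑ n ∈ Finset.Icc n0 N, d n * α n * φ n x
    have hQ_int : Integrable Q μ := integrable_finset_sum_mul hφ _ _
    refine ⟨N, hN, α, d, hd, E, hE, hσE, hH,
      (hfQ.trans_lt hgQ).trans_le (min_le_left _ _), ?_⟩
    calc ∫ x in Eᶜ, ‖Q x‖ ∂μ ≤ ∫ x, ‖Q x‖ ∂μ := setIntegral_norm_le_integral_norm hQ_int _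
      _ ≤ ∫ x, ‖g x‖ ∂μ + ∫ x, ‖g x - Q x‖ ∂μ :=
        integral_norm_le_integral_norm_add_integral_norm_sub hg hQ_int
      _ ≤ (C + 1) * ∫ x, ‖f x‖ ∂μ := by linarith [min_le_right δ (∫ x, ‖f x‖ ∂μ)]

end AsymApprox

theorem asymApproxProp_iff_hat_general {M : Type*} [MeasurableSpace M]
    (μ : Measure M)
    (φ : ℕ → M → ℂ) (hφ : ∀ n, Integrable (φ n) μ)
    (𝔾 : Set ℂ) :
    (∃ D : Set (M → ℂ), ∃ C : ℝ, L1DenseSubset μ D ∧ 0 < C ∧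
        AsymApproxPropWith μ φ 𝔾 D C) ↔
    (∃ D : Set (M → ℂ), ∃ C : ℝ, L1DenseSubset μ D ∧ 0 < C ∧
        AsymApproxPropHatWith μ φ 𝔾 D C) := by
  constructor
  · rintro ⟨D, C, hD, hC, h⟩
    exact ⟨D, C + 1, hD, by linarith, h.asymApproxPropHatWith hφ hD.1⟩
  · rintro ⟨D, C, hD, hC, h⟩
    exact ⟨D, C + 1, hD, by linarith, h.asymApproxPropWith hφ hD.1⟩

/-- The system `φ` possesses the asymptotic approximation property in
`L¹(μ)` if and only if the statement of Lemma `AsymApproxLemma` holds for some dense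
subset `D` and constant `C > 0`. -/
theorem asymApproxProp_iff_hat {M : Type*} [MeasurableSpace M]
    (μ : Measure M) [IsFiniteMeasure μ]
    (φ : ℕ → M → ℂ) (hφ : ∀ n, Integrable (φ n) μ)
    (c : ℕ → M → ℂ) (hc : ∀ n, MemLp (c n) ⊤ μ)
    (hbi : ∀ n m : ℕ, ∫ x, φ m x * c n x ∂μ = if n = m then 1 else 0)
    (𝔾 : Set ℂ) (h𝔾bdd : Bornology.IsBounded 𝔾) (h𝔾one : (1 : ℂ) ∈ 𝔾) :
    (∃ D : Set (M → ℂ), ∃ C : ℝ, L1DenseSubset μ D ∧ 0 < C ∧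
        AsymApproxPropWith μ φ 𝔾 D C) ↔
    (∃ D : Set (M → ℂ), ∃ C : ℝ, L1DenseSubset μ D ∧ 0 < C ∧
        AsymApproxPropHatWith μ φ 𝔾 D C) :=
  asymApproxProp_iff_hat_general μ φ hφ 𝔾
end

section
/- Let M be a finite measure space, {φ_n}_{n=1}^∞ ⊂ L^1(M) a minimal system, and 𝔾 ⊂ ℂ a bounded set with 1 ∈ 𝔾. If the asymptotic approximation property of {φ_n} in L^1(M) holds with some dense subset D ⊂ L^1(M) and constant C > 0, then it holds with the entire space L^1(M) in place of D (possibly with a different constant). -/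
open MeasureTheory Filter Topology

/-- If the asymptotic approximation property of a minimal system `φ` in
`L¹(μ)` holds with some dense subset `D` and constant `C > 0`, then it holds with the
entire space `L¹(μ)` in place of `D` (possibly with a different constant). -/
theorem asymApproxProp_of_dense_subset {M : Type*} [MeasurableSpace M]
    (μ : Measure M) [IsFiniteMeasure μ]
    (φ : ℕ → M → ℂ) (hφ : ∀ n, Integrable (φ n) μ)
    (𝔾 : Set ℂ) (h𝔾bdd : Bornology.IsBounded 𝔾) (h𝔾one : (1 : ℂ) ∈ 𝔾)
    (D : Set (M → ℂ)) (hD : L1DenseSubset μ D)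
    (C : ℝ) (hC : 0 < C)
    (haap : AsymApproxPropWith μ φ 𝔾 D C) :
    ∃ C' : ℝ, 0 < C' ∧
      AsymApproxPropWith μ φ 𝔾 {f : M → ℂ | Integrable f μ} C' := by
  refine ⟨2 * C, by linarith, ?_⟩
  intro g hg ε hε δ hδ σ hσ n0
  simp only [Set.mem_setOf_eq] at hg
  by_cases hg0 : ∫ x, ‖g x‖ ∂μ = 0
  · -- the case `‖g‖₁ = 0`: take zero coefficients
    have hgae : g =ᵐ[μ] 0 := by
      have := (integral_eq_zero_iff_of_nonneg (fun x => norm_nonneg (g x))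
        hg.norm).mp hg0
      filter_upwards [this] with x hx
      simpa using hx
    refine ⟨n0 + 1, by omega, 0, fun _ => 1, fun _ => h𝔾one, Set.univ,
      MeasurableSet.univ, ?_, ?_, ?_, ?_⟩
    · simp [ENNReal.ofReal_pos.mpr hσ]
    · simpa using hε
    · simp only [Pi.zero_apply, mul_zero, zero_mul, Finset.sum_const_zero, sub_zero,
        Measure.restrict_univ]
      rw [hg0]; exact hδ
    · simp only [Pi.zero_apply, mul_zero, zero_mul, Finset.sum_const_zero, norm_zero,
        integral_zero, hg0, mul_zero]
      simp [hg0]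
  · have hgpos : 0 < ∫ x, ‖g x‖ ∂μ :=
      lt_of_le_of_ne (integral_nonneg fun x => norm_nonneg _) (Ne.symm hg0)
    set η : ℝ := min (δ / 2) (∫ x, ‖g x‖ ∂μ) with hη
    obtain ⟨f, hfD, hfg⟩ := hD.2 g hg η (lt_min (by linarith) hgpos)
    have hfInt : Integrable f μ := hD.1 f hfD
    obtain ⟨N, hN, α, d, hd, E, hE, hEσ, hH, hfQ, hQ⟩ :=
      haap f hfD ε hε (δ / 2) (by linarith) σ hσ n0
    set Q : M → ℂ := fun x => ∑ n ∈ Finset.Icc n0 N, d n * α n * φ n x with hQdef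
    have hQInt : Integrable Q μ := by
      apply integrable_finset_sum
      intro n _
      exact (hφ n).const_mul _
    have hfgInt : Integrable (fun x => f x - g x) μ := hfInt.sub hg
    refine ⟨N, hN, α, d, hd, E, hE, hEσ, hH, ?_, ?_⟩
    · -- ∫_E ‖g - Q‖ < δ
      have h1 : ∫ x in E, ‖g x - Q x‖ ∂μ ≤
          ∫ x in E, (‖f x - g x‖ + ‖f x - Q x‖) ∂μ := by
        apply integral_mono ((hg.sub hQInt).norm.restrict)
          ((hfgInt.norm.restrict).add ((hfInt.sub hQInt).norm.restrict))
        intro x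
        calc ‖g x - Q x‖ = ‖(g x - f x) + (f x - Q x)‖ := by ring_nf
          _ ≤ ‖g x - f x‖ + ‖f x - Q x‖ := norm_add_le _ _
          _ = ‖f x - g x‖ + ‖f x - Q x‖ := by rw [norm_sub_rev]
      have h2 : ∫ x in E, (‖f x - g x‖ + ‖f x - Q x‖) ∂μ =
          (∫ x in E, ‖f x - g x‖ ∂μ) + ∫ x in E, ‖f x - Q x‖ ∂μ :=
        integral_add (hfgInt.norm.restrict) ((hfInt.sub hQInt).norm.restrict)
      have h3 : ∫ x in E, ‖f x - g x‖ ∂μ ≤ ∫ x, ‖f x - g x‖ ∂μ :=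
        integral_mono_measure Measure.restrict_le_self
          (Filter.Eventually.of_forall fun x => norm_nonneg _) hfgInt.norm
      have hηδ : η ≤ δ / 2 := min_le_left _ _
      calc ∫ x in E, ‖g x - Q x‖ ∂μ
          ≤ (∫ x in E, ‖f x - g x‖ ∂μ) + ∫ x in E, ‖f x - Q x‖ ∂μ := by
            rw [← h2]; exact h1
        _ < η + δ / 2 := by
            have := lt_of_le_of_lt h3 hfg
            exact add_lt_add_of_lt_of_lt this hfQ
        _ ≤ δ := by linarith
    · -- ∫_{Eᶜ} ‖Q‖ ≤ 2C ∫ ‖g‖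
      have hf_le : ∫ x, ‖f x‖ ∂μ ≤ (∫ x, ‖g x‖ ∂μ) + ∫ x, ‖f x - g x‖ ∂μ := by
        have : ∫ x, ‖f x‖ ∂μ ≤ ∫ x, (‖g x‖ + ‖f x - g x‖) ∂μ := by
          apply integral_mono hfInt.norm (hg.norm.add hfgInt.norm)
          intro x
          calc ‖f x‖ = ‖g x + (f x - g x)‖ := by ring_nf
            _ ≤ ‖g x‖ + ‖f x - g x‖ := norm_add_le _ _
        rwa [integral_add hg.norm hfgInt.norm] at this
      have hη_le : η ≤ ∫ x, ‖g x‖ ∂μ := min_le_right _ _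
      calc ∫ x in Eᶜ, ‖Q x‖ ∂μ ≤ C * ∫ x, ‖f x‖ ∂μ := hQ
        _ ≤ C * (2 * ∫ x, ‖g x‖ ∂μ) := by
            apply mul_le_mul_of_nonneg_left _ hC.le
            have : ∫ x, ‖f x - g x‖ ∂μ ≤ ∫ x, ‖g x‖ ∂μ :=
              le_trans hfg.le hη_le
            linarith
        _ = 2 * C * ∫ x, ‖g x‖ ∂μ := by ring
end

section
/- Let M be a finite separable diffuse (nonatomic) measure space, {φ_n}_{n=1}^∞ ⊂ L^1(M) a minimal system with biorthogonal functionals {c_n} ⊂ L^∞(M), and 𝔾 ⊂ ℂ a bounded set with 1 ∈ 𝔾. If {φ_n} possesses the asymptotic approximation property in L^1(M), then there exists a function U ∈ L^1(M) which is asymptotically conditionally universal for L^1(M) with respect to {φ_n}: there exist values {δ_n}_{n=1}^∞ ⊂ 𝔾 and measurable sets F_1 ⊂ F_2 ⊂ … ⊂ M with |F_m^∁| → 0 as m → ∞, such that for every f ∈ L^1(M) there is a subsequence {N_q}_{q=1}^∞ ⊂ ℕ with ∫_{F_m} |Σ_{n=1}^{N_q} δ_n c_n(U) φ_n(x) − f(x)|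 dx → 0 as q → ∞, for every m ∈ ℕ. -/
/-!
The universal function is built blockwise. Enumerate a dense sequence `gⱼ` of `L¹` so that the
`k`-th target `fₖ = g_{(unpair k).1}` runs through every `gⱼ` infinitely often. At stage `k`,
apply the asymptotic approximation property, beyond all indices used so far, to an element of `D`
close to `fₖ - Sₖ`, where `Sₖ` is the signed partial sum built so far: this yields a block
polynomial `Hₖ` with `‖Hₖ‖₁ < 2⁻ᵏ` whose signed version `Qₖ` makes `Sₖ₊₁ = Sₖ + Qₖ` close to `fₖ`
on a set `Eₖ` with `|Eₖᶜ| < 2⁻ᵏ`. Then `U = ∑ Hₖ` converges in `L¹`, biorthogonality identifies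
the Fourier coefficients of `U` with the coefficients of the blocks, so the signed partial sums of
`U` at the block ends are the `Sₖ`; on `Fₘ = ⋂_{k ≥ m} Eₖ` they approximate every `gⱼ`, hence
every `f ∈ L¹` along a subsequence. Property (4) of the approximation property is not needed.
-/

open MeasureTheory Filter Topology

open Finset

theorem exists_seq_of_forall_exists_step {β : Type*} {P : β → Prop} {R : ℕ → β → β → Prop}
    {x₀ : β} (h₀ : P x₀) (h : ∀ k x, P x → ∃ y, P y ∧ R k x y) :
    ∃ x : ℕ → β, x 0 = x₀ ∧ ∀ k, P (x k) ∧ R k (x k) (x (k + 1)) := by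
  choose next hnext using fun k (x : Subtype P) => h k x x.2
  let y : ℕ → Subtype P := fun k => Nat.rec ⟨x₀, h₀⟩ (fun k x => ⟨next k x, (hnext k x).1⟩) k
  exact ⟨fun k => (y k).1, rfl, fun k => ⟨(y k).2, (hnext k (y k)).2⟩⟩

theorem Finset.sum_range_sum_Ico_eq {A : Type*} [AddCommMonoid A] {B : ℕ → ℕ} (hB : Monotone B)
    (g : ℕ → A) (K : ℕ) :
    ∑ k ∈ range K, ∑ n ∈ Ico (B k) (B (k + 1)), g n = ∑ n ∈ Ico (B 0) (B K), g n := by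
  induction K with
  | zero => simp
  | succ K ih =>
    rw [sum_range_succ, ih, sum_Ico_consecutive _ (hB (Nat.zero_le K)) (hB K.le_succ)]

def blockIndex (B : ℕ → ℕ) (n : ℕ) : ℕ := Nat.findGreatest (fun k => B k ≤ n) n

theorem blockIndex_eq_of_mem_Ico {B : ℕ → ℕ} (hB : StrictMono B) {k n : ℕ}
    (hn : n ∈ Ico (B k) (B (k + 1))) : blockIndex B n = k := by
  rw [mem_Ico] at hn
  refine Nat.findGreatest_eq_iff.2 ⟨(hB.id_le k).trans hn.1, fun _ => hn.1, fun j hkj _ hj => ?_⟩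
  exact (hn.2.trans_le (hB.monotone hkj)).not_ge hj

theorem sum_Ico_blockIndex {A : Type*} [AddCommMonoid A] {B : ℕ → ℕ} (hB : StrictMono B)
    (g : ℕ → ℕ → A) (k : ℕ) :
    ∑ n ∈ Ico (B k) (B (k + 1)), g (blockIndex B n) n = ∑ n ∈ Ico (B k) (B (k + 1)), g k n :=
  sum_congr rfl fun n hn => by rw [blockIndex_eq_of_mem_Ico hB hn]

theorem monotone_iInter_add {β : Type*} (s : ℕ → Set β) : Monotone fun m => ⋂ k, s (k + m) :=
  fun m m' h => Set.iInter_mono' fun k => ⟨k + (m' - m), by rw [add_assoc, Nat.sub_add_cancel h]⟩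

namespace MeasureTheory

variable {α : Type*} [MeasurableSpace α] {μ : Measure α}

section Normed

variable {E : Type*} [NormedAddCommGroup E]

theorem integrable_tsum_of_summable_integral_norm [CompleteSpace E] {F : ℕ → α → E}
    (hF : ∀ k, Integrable (F k) μ) (hsum : Summable fun k => ∫ x, ‖F k x‖ ∂μ) :
    Integrable (fun x => ∑' k, F k x) μ := by
  have hfin : ∑' k, ∫⁻ x, ‖F k x‖ₑ ∂μ ≠ ⊤ := by
    simp_rw [← ofReal_integral_norm_eq_lintegral_enorm (hF _)]
    rw [← ENNReal.ofReal_tsum_of_nonneg (fun k => integral_nonneg fun _ => norm_nonneg _) hsum]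
    exact ENNReal.ofReal_ne_top
  have hae : ∀ᵐ x ∂μ, Summable fun k => ‖F k x‖ :=
    summable_norm_of_tsum_eLpNorm_ne_top le_rfl (fun k => (hF k).1)
      (by simpa only [eLpNorm_one_eq_lintegral_enorm] using hfin)
  refine ⟨aestronglyMeasurable_of_tendsto_ae atTop
    (fun K => (integrable_finsetSum (range K) fun k _ => hF k).1) ?_, ?_⟩
  · filter_upwards [hae] with x hx
    simpa only [Finset.sum_apply] using hx.of_norm.hasSum.tendsto_sum_nat
  · calc ∫⁻ x, ‖∑' k, F k x‖ₑ ∂μ ≤ ∫⁻ x, ∑' k, ‖F k x‖ₑ ∂μ :=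
          lintegral_mono fun _ => enorm_tsum_le_tsum_enorm
      _ = ∑' k, ∫⁻ x, ‖F k x‖ₑ ∂μ := lintegral_tsum fun k => (hF k).1.enorm
      _ < ⊤ := hfin.lt_top

theorem MemLp.ae_norm_le_toReal_eLpNorm_top {g : α → E} (hg : MemLp g ⊤ μ) :
    ∀ᵐ x ∂μ, ‖g x‖ ≤ (eLpNorm g ⊤ μ).toReal := by
  filter_upwards [enorm_ae_le_eLpNormEssSup g μ] with x hx
  rw [eLpNorm_exponent_top, ← toReal_enorm]
  exact ENNReal.toReal_mono (by simpa [eLpNorm_exponent_top] using hg.2.ne) hx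

theorem measure_compl_iInter_add_tendsto_zero {s : ℕ → Set α} (hs : ∑' k, μ (s k)ᶜ ≠ ⊤) :
    Tendsto (fun m => μ (⋂ k, s (k + m))ᶜ) atTop (𝓝 0) := by
  refine tendsto_of_tendsto_of_tendsto_of_le_of_le tendsto_const_nhds
    (ENNReal.tendsto_sum_nat_add _ hs) (fun _ => zero_le) fun m => ?_
  rw [Set.compl_iInter]
  exact measure_iUnion_le _

theorem setIntegral_norm_sub_le {f g h : α → E} (hf : Integrable f μ) (hg : Integrable g μ)
    (hh : Integrable h μ) (s : Set α) :
    ∫ x in s, ‖f x - h x‖ ∂μ ≤ ∫ x in s, ‖f x - g x‖ ∂μ + ∫ x in s, ‖g x - h x‖ ∂μ := by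
  have hfg : Integrable (fun x => ‖f x - g x‖) μ := (hf.sub hg).norm
  have hgh : Integrable (fun x => ‖g x - h x‖) μ := (hg.sub hh).norm
  rw [← integral_add hfg.integrableOn hgh.integrableOn]
  exact integral_mono (hf.sub hh).norm.integrableOn (hfg.add hgh).integrableOn
    fun x => norm_sub_le_norm_sub_add_norm_sub _ _ _

theorem tendsto_setIntegral_iInter_add_norm_sub {S g : ℕ → α → E} {f : α → E} {s : ℕ → Set α}
    {ε : ℕ → ℝ} {K : ℕ → ℕ} (hS : ∀ k, Integrable (S k) μ) (hg : ∀ k, Integrable (g k) μ)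
    (hf : Integrable f μ) (hSg : ∀ k, ∫ x in s k, ‖S k x - g k x‖ ∂μ < ε k)
    (hε : Tendsto ε atTop (𝓝 0)) (hK : Tendsto K atTop atTop)
    (hgf : Tendsto (fun q => ∫ x, ‖g (K q) x - f x‖ ∂μ) atTop (𝓝 0)) (m : ℕ) :
    Tendsto (fun q => ∫ x in ⋂ k, s (k + m), ‖S (K q) x - f x‖ ∂μ) atTop (𝓝 0) := by
  have hbound : ∀ᶠ q in atTop, ∫ x in ⋂ k, s (k + m), ‖S (K q) x - f x‖ ∂μ ≤
      ε (K q) + ∫ x, ‖g (K q) x - f x‖ ∂μ := by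
    filter_upwards [hK.eventually_ge_atTop m] with q hq
    have hsub : ⋂ k, s (k + m) ⊆ s (K q) := by
      simpa [Nat.sub_add_cancel hq] using Set.iInter_subset (fun k => s (k + m)) (K q - m)
    calc _ ≤ ∫ x in ⋂ k, s (k + m), ‖S (K q) x - g (K q) x‖ ∂μ +
          ∫ x in ⋂ k, s (k + m), ‖g (K q) x - f x‖ ∂μ := setIntegral_norm_sub_le (hS _) (hg _) hf _
      _ ≤ ε (K q) + ∫ x, ‖g (K q) x - f x‖ ∂μ := by
        gcongr ?_ + ?_
        · exact (setIntegral_mono_set ((hS _).sub (hg _)).norm.integrableOn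
            (.of_forall fun _ => norm_nonneg _) hsub.eventuallyLE).trans (hSg _).le
        · exact setIntegral_le_integral ((hg _).sub hf).norm (.of_forall fun _ => norm_nonneg _)
  exact squeeze_zero' (.of_forall fun _ => integral_nonneg fun _ => norm_nonneg _) hbound
    (by simpa using (hε.comp hK).add hgf)

end Normed

section Biorthogonal

variable {𝕜 : Type*} [RCLike 𝕜]

theorem hasSum_integral_tsum_mul {F : ℕ → α → 𝕜} {g : α → 𝕜} (hF : ∀ k, Integrable (F k) μ)
    (hsum : Summable fun k => ∫ x, ‖F k x‖ ∂μ) (hg : MemLp g ⊤ μ) :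
    HasSum (fun k => ∫ x, F k x * g x ∂μ) (∫ x, (∑' k, F k x) * g x ∂μ) := by
  set L := (eLpNorm g ⊤ μ).toReal
  have hFg : ∀ k, Integrable (fun x => F k x * g x) μ := fun k => (hF k).mul_of_top_left hg
  have hle : ∀ k, ∫ x, ‖F k x * g x‖ ∂μ ≤ (∫ x, ‖F k x‖ ∂μ) * L := by
    intro k
    rw [← integral_mul_const]
    refine integral_mono_ae (hFg k).norm ((hF k).norm.mul_const L) ?_
    filter_upwards [hg.ae_norm_le_toReal_eLpNorm_top] with x hx
    rw [norm_mul]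
    exact mul_le_mul_of_nonneg_left hx (norm_nonneg _)
  simp_rw [← tsum_mul_right]
  exact hasSum_integral_of_summable_integral_norm hFg
    ((hsum.mul_right L).of_nonneg_of_le (fun k => integral_nonneg fun _ => norm_nonneg _) hle)

variable {φ : ℕ → α → 𝕜} {c : α → 𝕜} {n : ℕ}

theorem integral_sum_mul_eq_of_biorthogonal (hφ : ∀ m, Integrable (φ m) μ) (hc : MemLp c ⊤ μ)
    (hbi : ∀ m, ∫ x, φ m x * c x ∂μ = if n = m then 1 else 0) (a : ℕ → 𝕜) (s : Finset ℕ) :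
    ∫ x, (∑ m ∈ s, a m * φ m x) * c x ∂μ = if n ∈ s then a n else 0 := by
  have hφc : ∀ m, Integrable (fun x => φ m x * c x) μ := fun m => (hφ m).mul_of_top_left hc
  simp_rw [Finset.sum_mul, mul_assoc]
  rw [integral_finsetSum _ fun m _ => (hφc m).const_mul (a m)]
  simp_rw [integral_const_mul, hbi, mul_ite, mul_one, mul_zero, Finset.sum_ite_eq]

theorem integral_tsum_blocks_mul_eq_of_biorthogonal {B : ℕ → ℕ} (hB : StrictMono B) (hB0 : B 0 = 0)
    (hφ : ∀ m, Integrable (φ m) μ) (hc : MemLp c ⊤ μ)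
    (hbi : ∀ m, ∫ x, φ m x * c x ∂μ = if n = m then 1 else 0) (a : ℕ → 𝕜)
    (hsum : Summable fun k => ∫ x, ‖∑ m ∈ Ico (B k) (B (k + 1)), a m * φ m x‖ ∂μ) :
    ∫ x, (∑' k, ∑ m ∈ Ico (B k) (B (k + 1)), a m * φ m x) * c x ∂μ = a n := by
  have hblock : ∀ k, Integrable (fun x => ∑ m ∈ Ico (B k) (B (k + 1)), a m * φ m x) μ :=
    fun k => integrable_finsetSum _ fun m _ => (hφ m).const_mul _
  have hpartial : ∀ K, ∑ k ∈ range K, ∫ x, (∑ m ∈ Ico (B k) (B (k + 1)), a m * φ m x) * c x ∂μ =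
      if n ∈ range (B K) then a n else 0 := by
    intro K
    have hblock_c : ∀ k, Integrable
        (fun x => (∑ m ∈ Ico (B k) (B (k + 1)), a m * φ m x) * c x) μ :=
      fun k => (hblock k).mul_of_top_left hc
    rw [← integral_finsetSum _ fun k _ => hblock_c k]
    simp_rw [← Finset.sum_mul, sum_range_sum_Ico_eq hB.monotone, hB0, ← range_eq_Ico]
    exact integral_sum_mul_eq_of_biorthogonal hφ hc hbi a _
  refine tendsto_nhds_unique (hasSum_integral_tsum_mul hblock hsum hc).tendsto_sum_nat ?_
  simp_rw [hpartial]
  refine tendsto_const_nhds.congr' ?_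
  filter_upwards [eventually_gt_atTop n] with K hK
  rw [if_pos (mem_range.2 (hK.trans_le (hB.id_le K)))]

end Biorthogonal

end MeasureTheory

section AsymApprox

variable {M : Type*} [MeasurableSpace M] {μ : Measure M} {φ : ℕ → M → ℂ} {𝔾 : Set ℂ}
  {D : Set (M → ℂ)}

theorem L1DenseSubset.exists_eq_range (hD : L1DenseSubset μ D) (hc : D.Countable) :
    ∃ fs : ℕ → M → ℂ, D = Set.range fs := by
  obtain ⟨f, hf, -⟩ := hD.2 0 (integrable_zero M ℂ μ) 1 one_pos
  exact hc.exists_eq_range ⟨f, hf⟩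

theorem L1DenseSubset.exists_strictMono_tendsto_unpair {fs : ℕ → M → ℂ}
    (hfs : L1DenseSubset μ (Set.range fs)) {f : M → ℂ} (hf : Integrable f μ) :
    ∃ K : ℕ → ℕ, StrictMono K ∧
      Tendsto (fun q => ∫ x, ‖fs (K q).unpair.1 x - f x‖ ∂μ) atTop (𝓝 0) := by
  obtain ⟨K, hK, hKf⟩ := extraction_forall_of_frequently
    (P := fun q k => ∫ x, ‖fs k.unpair.1 x - f x‖ ∂μ < 1 / ((q : ℝ) + 1)) fun q => by
    refine frequently_atTop.2 fun b => ?_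
    obtain ⟨_, ⟨j, rfl⟩, hj⟩ := hfs.2 f hf _ Nat.one_div_pos_of_nat
    exact ⟨Nat.pair j b, Nat.right_le_pair j b, by simpa using hj⟩
  exact ⟨K, hK, squeeze_zero (fun _ => integral_nonneg fun _ => norm_nonneg _)
    (fun q => (hKf q).le) tendsto_one_div_add_atTop_nhds_zero_nat⟩

namespace AsymApproxPropWith

variable {C : ℝ}

theorem exists_sum_approx (hAAP : AsymApproxPropWith μ φ 𝔾 D C) (hD : L1DenseSubset μ D)
    (hφ : ∀ n, Integrable (φ n) μ) {r : M → ℂ} (hr : Integrable r μ) {η : ℝ} (hη : 0 < η) (n₀ : ℕ) :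
    ∃ N, n₀ < N ∧ ∃ α δ : ℕ → ℂ, (∀ n, δ n ∈ 𝔾) ∧ ∃ E : Set M, MeasurableSet E ∧
      μ Eᶜ < ENNReal.ofReal η ∧ ∫ x, ‖∑ n ∈ Ico n₀ N, α n * φ n x‖ ∂μ < η ∧
      ∫ x in E, ‖∑ n ∈ Ico n₀ N, δ n * α n * φ n x - r x‖ ∂μ < 2 * η := by
  obtain ⟨g, hgD, hgr⟩ := hD.2 r hr η hη
  obtain ⟨N, hN, α, δ, hδ, E, hE, hEc, hH, hQ, -⟩ := hAAP g hgD η hη η hη η hη n₀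
  rw [← Ico_add_one_right_eq_Icc] at hH hQ
  refine ⟨N + 1, by omega, α, δ, hδ, E, hE, hEc, hH, ?_⟩
  have hQi : Integrable (fun x => ∑ n ∈ Ico n₀ (N + 1), δ n * α n * φ n x) μ :=
    integrable_finsetSum _ fun n _ => (hφ n).const_mul _
  have hg : Integrable g μ := hD.1 g hgD
  calc _ ≤ ∫ x in E, ‖∑ n ∈ Ico n₀ (N + 1), δ n * α n * φ n x - g x‖ ∂μ +
        ∫ x in E, ‖g x - r x‖ ∂μ := setIntegral_norm_sub_le hQi hg hr E
    _ < η + η := by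
      gcongr ?_ + ?_
      · simpa only [norm_sub_rev] using hQ
      · exact (setIntegral_le_integral (hg.sub hr).norm
          (.of_forall fun _ => norm_nonneg _)).trans_lt hgr
    _ = 2 * η := by ring

theorem exists_blockwise_approx (hAAP : AsymApproxPropWith μ φ 𝔾 D C) (hD : L1DenseSubset μ D)
    (hφ : ∀ n, Integrable (φ n) μ) {f : ℕ → M → ℂ} (hf : ∀ k, Integrable (f k) μ) :
    ∃ (B : ℕ → ℕ) (a d : ℕ → ℂ) (E : ℕ → Set M), StrictMono B ∧ B 0 = 0 ∧ (∀ n, d n ∈ 𝔾) ∧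
      (∀ k, MeasurableSet (E k)) ∧ (∀ k, μ (E k)ᶜ < ENNReal.ofReal (2⁻¹ ^ k)) ∧
      (∀ k, ∫ x, ‖∑ n ∈ Ico (B k) (B (k + 1)), a n * φ n x‖ ∂μ < 2⁻¹ ^ k) ∧
      ∀ k, ∫ x in E k, ‖∑ n ∈ range (B (k + 1)), d n * a n * φ n x - f k x‖ ∂μ < 2 * 2⁻¹ ^ k := by
  -- a stage is the start of the next block together with the signed partial sum built so far
  obtain ⟨st, hst0, hst⟩ := exists_seq_of_forall_exists_step
    (P := fun s : ℕ × (M → ℂ) => Integrable s.2 μ) (x₀ := (0, 0)) (integrable_zero M ℂ μ)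
    (R := fun k s t => ∃ (α δ : ℕ → ℂ) (E : Set M), s.1 < t.1 ∧ (∀ n, δ n ∈ 𝔾) ∧
      MeasurableSet E ∧ μ Eᶜ < ENNReal.ofReal (2⁻¹ ^ k) ∧
      ∫ x, ‖∑ n ∈ Ico s.1 t.1, α n * φ n x‖ ∂μ < 2⁻¹ ^ k ∧
      t.2 = (fun x => s.2 x + ∑ n ∈ Ico s.1 t.1, δ n * α n * φ n x) ∧
      ∫ x in E, ‖t.2 x - f k x‖ ∂μ < 2 * 2⁻¹ ^ k)
    fun k s hs => by
      obtain ⟨N, hN, α, δ, hδ, E, hE, hEc, hH, hQ⟩ :=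
        hAAP.exists_sum_approx hD hφ ((hf k).sub hs) (η := 2⁻¹ ^ k) (by positivity) s.1
      refine ⟨(N, fun x => s.2 x + ∑ n ∈ Ico s.1 N, δ n * α n * φ n x),
        hs.add (integrable_finsetSum _ fun n _ => (hφ n).const_mul _),
        α, δ, E, hN, hδ, hE, hEc, hH, rfl, ?_⟩
      convert hQ using 4 with x
      simp only [Pi.sub_apply]
      ring
  choose α δ E hB hδ hE hEc hH hS hQ using fun k => (hst k).2
  set B := fun k => (st k).1
  have hBmono : StrictMono B := strictMono_nat_of_lt_succ hB
  have hpartial : ∀ k, (st k).2 = fun x =>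
      ∑ n ∈ range (B k), δ (blockIndex B n) n * α (blockIndex B n) n * φ n x := by
    intro k
    induction k with
    | zero =>
      funext x
      simp [B, hst0]
    | succ k ih =>
      funext x
      rw [hS k, ih, ← sum_range_add_sum_Ico _ (hB k).le,
        sum_Ico_blockIndex hBmono fun j n => δ j n * α j n * φ n x]
  refine ⟨B, fun n => α (blockIndex B n) n, fun n => δ (blockIndex B n) n, E, hBmono,
    by simp [B, hst0], fun n => hδ _ n, hE, hEc, fun k => ?_, fun k => ?_⟩
  · convert hH k using 4 with x
    exact sum_Ico_blockIndex hBmono (fun j n => α j n * φ n x) k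
  · simpa only [hpartial] using hQ k

end AsymApproxPropWith

end AsymApprox

theorem exists_asymptotically_conditionally_universal_general {M : Type*} [MeasurableSpace M]
    (μ : Measure M)
    -- separability of the measure space, expressed as separability of `L¹(μ)`:
    (hsep : ∃ Dc : Set (M → ℂ), Dc.Countable ∧ L1DenseSubset μ Dc)
    (φ : ℕ → M → ℂ) (hφ : ∀ n, Integrable (φ n) μ)
    (c : ℕ → M → ℂ) (hc : ∀ n, MemLp (c n) ⊤ μ)
    (hbi : ∀ n m : ℕ, ∫ x, φ m x * c n x ∂μ = if n = m then 1 else 0)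
    (𝔾 : Set ℂ)
    (haap : ∃ D : Set (M → ℂ), ∃ C : ℝ, L1DenseSubset μ D ∧ 0 < C ∧
      AsymApproxPropWith μ φ 𝔾 D C) :
    ∃ U : M → ℂ, Integrable U μ ∧
      ∃ d : ℕ → ℂ, (∀ n, d n ∈ 𝔾) ∧
      ∃ F : ℕ → Set M, (∀ m, MeasurableSet (F m)) ∧ Monotone F ∧
        Tendsto (fun m => μ (F m)ᶜ) atTop (𝓝 0) ∧
        ∀ f : M → ℂ, Integrable f μ →
          ∃ N : ℕ → ℕ, StrictMono N ∧ ∀ m : ℕ,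
            Tendsto (fun q => ∫ x in F m,
                ‖(∑ n ∈ Finset.range (N q), d n * (∫ t, U t * c n t ∂μ) * φ n x) - f x‖ ∂μ)
              atTop (𝓝 0) := by
  obtain ⟨_, hDc, hfs⟩ := hsep
  obtain ⟨fs, rfl⟩ := hfs.exists_eq_range hDc
  obtain ⟨D, C, hD, -, hAAP⟩ := haap
  obtain ⟨B, a, d, E, hB, hB0, hd, hE, hEc, hH, hS⟩ := hAAP.exists_blockwise_approx hD hφ
    (f := fun k => fs k.unpair.1) fun k => hfs.1 _ ⟨_, rfl⟩
  have hgeom : Summable fun k : ℕ => (2⁻¹ : ℝ) ^ k :=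
    summable_geometric_of_lt_one (by norm_num) (by norm_num)
  have hHsum : Summable fun k => ∫ x, ‖∑ n ∈ Ico (B k) (B (k + 1)), a n * φ n x‖ ∂μ :=
    hgeom.of_nonneg_of_le (fun _ => integral_nonneg fun _ => norm_nonneg _) fun k => (hH k).le
  have hEsum : ∑' k, μ (E k)ᶜ ≠ ⊤ :=
    ne_top_of_le_ne_top ENNReal.ofReal_ne_top <| (ENNReal.tsum_le_tsum fun k => (hEc k).le).trans_eq
      (ENNReal.ofReal_tsum_of_nonneg (fun _ => by positivity) hgeom).symm
  refine ⟨_, integrable_tsum_of_summable_integral_norm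
    (fun k => integrable_finsetSum _ fun n _ => (hφ n).const_mul _) hHsum, d, hd,
    fun m => ⋂ k, E (k + m), fun m => .iInter fun k => hE _,
    monotone_iInter_add E,
    measure_compl_iInter_add_tendsto_zero hEsum, fun f hf => ?_⟩
  obtain ⟨K, hK, hKf⟩ := hfs.exists_strictMono_tendsto_unpair hf
  refine ⟨fun q => B (K q + 1), fun q r h => hB (Nat.succ_lt_succ (hK h)), fun m => ?_⟩
  simp only [integral_tsum_blocks_mul_eq_of_biorthogonal hB hB0 hφ (hc _) (hbi _) a hHsum]
  refine tendsto_setIntegral_iInter_add_norm_sub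
    (S := fun k x => ∑ n ∈ range (B (k + 1)), d n * a n * φ n x)
    (fun k => integrable_finsetSum _ fun n _ => (hφ n).const_mul _) (fun k => hfs.1 _ ⟨_, rfl⟩)
    hf hS ?_ hK.tendsto_atTop hKf m
  simpa using (tendsto_pow_atTop_nhds_zero_of_lt_one (by norm_num : (0 : ℝ) ≤ 2⁻¹)
    (by norm_num)).const_mul 2

/-- If a minimal system `φ` (with biorthogonal functionals `c` in
`L^∞(μ)`) possesses the asymptotic approximation property in `L¹(μ)`, where `μ` is a
finite separable diffuse measure, then there exists an integrable function `U` which is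
asymptotically conditionally universal for `L¹(μ)` w.r.t. `φ`. -/
theorem exists_asymptotically_conditionally_universal {M : Type*} [MeasurableSpace M]
    (μ : Measure M) [IsFiniteMeasure μ] [NullSingletonClass μ]
    -- separability of the measure space, expressed as separability of `L¹(μ)`:
    (hsep : ∃ Dc : Set (M → ℂ), Dc.Countable ∧ L1DenseSubset μ Dc)
    (φ : ℕ → M → ℂ) (hφ : ∀ n, Integrable (φ n) μ)
    (c : ℕ → M → ℂ) (hc : ∀ n, MemLp (c n) ⊤ μ)
    (hbi : ∀ n m : ℕ, ∫ x, φ m x * c n x ∂μ = if n = m then 1 else 0)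
    (𝔾 : Set ℂ) (h𝔾bdd : Bornology.IsBounded 𝔾) (h𝔾one : (1 : ℂ) ∈ 𝔾)
    (haap : ∃ D : Set (M → ℂ), ∃ C : ℝ, L1DenseSubset μ D ∧ 0 < C ∧
      AsymApproxPropWith μ φ 𝔾 D C) :
    ∃ U : M → ℂ, Integrable U μ ∧
      ∃ d : ℕ → ℂ, (∀ n, d n ∈ 𝔾) ∧
      ∃ F : ℕ → Set M, (∀ m, MeasurableSet (F m)) ∧ Monotone F ∧
        Tendsto (fun m => μ (F m)ᶜ) atTop (𝓝 0) ∧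
        ∀ f : M → ℂ, Integrable f μ →
          ∃ N : ℕ → ℕ, StrictMono N ∧ ∀ m : ℕ,
            Tendsto (fun q => ∫ x in F m,
                ‖(∑ n ∈ Finset.range (N q), d n * (∫ t, U t * c n t ∂μ) * φ n x) - f x‖ ∂μ)
              atTop (𝓝 0) :=
  exists_asymptotically_conditionally_universal_general μ hsep φ hφ c hc hbi 𝔾 haap
end
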